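/- Let 𝔅 be the block set of a 4-(23,7,1) design on the point set {1,…,23}, i.e., a family of 7-element subsets such that every 4-element subset of {1,…,23} lies in exactly one block (so |𝔅| = 253 and any two distinct blocks meet in 1 or 3 points). For each B ∈ 𝔅 let v_B ∈ H_24 be the point of ℝ^{25} whose i-th coordinate equals −3/10 for i ∈ {1} ∪ {2 + j : j ∈ B} and equals 1/5 otherwise, and let 𝔅' = {v_B : B ∈ 𝔅}. Then X = R_24 ∪ 𝔅' is a maximal 2-distance set in H_24 with exactly 278 points, whose two distances are √2 and √3: every pair of distinct points of X is at distance √2 or √3, both distances occur, and for every z ∈ H_24 with z ∉ X the set X ∪ {z} is not a 2-distance set. -/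

import Mathlib

noncomputable section

open scoped BigOperators Classical

/-- The set of Euclidean distances between distinct points of `X`. -/
def distSet {m : ℕ} (X : Set (EuclideanSpace ℝ (Fin m))) : Set ℝ :=
  {r | ∃ x ∈ X, ∃ y ∈ X, x ≠ y ∧ dist x y = r}

/-- `X` is a 2-distance set: exactly two distances occur between distinct points. -/
def IsTwoDistSet {m : ℕ} (X : Set (EuclideanSpace ℝ (Fin m))) : Prop :=
  (distSet X).ncard = 2

/-- The affine hyperplane `H_d = {x ∈ ℝ^{d+1} : ∑ x_i = 1}`. -/
def Hplane (d : ℕ) : Set (EuclideanSpace ℝ (Fin (d+1))) :=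
  {x | ∑ i, x i = 1}

/-- The regular simplex `R_d`: the standard basis vectors of `ℝ^{d+1}`. -/
def simplex (d : ℕ) : Set (EuclideanSpace ℝ (Fin (d+1))) :=
  Set.range (fun i => EuclideanSpace.single i (1:ℝ))

/-- The constant `c = (1 - (d+1-k)β)/(d+1)`. -/
def cval (d k : ℕ) (β : ℝ) : ℝ := (1 - ((d:ℝ) + 1 - (k:ℝ)) * β) / ((d:ℝ) + 1)

/-- The set `T_d(k,β)` of points of `H_d` all of whose coordinates lie in `{c, c+β}`,
with exactly `k` coordinates equal to `c`. -/
def Tset (d k : ℕ) (β : ℝ) : Set (EuclideanSpace ℝ (Fin (d+1))) :=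
  {x | x ∈ Hplane d ∧ (∀ i, x i = cval d k β ∨ x i = cval d k β + β) ∧
    {i | x i = cval d k β}.ncard = k}

/-- The point `v_B ∈ H_24 ⊆ ℝ^25` attached to a block `B ⊆ {1,…,23}`: its `i`-th
coordinate (1-indexed) is `-3/10` for `i ∈ {1} ∪ {2+j : j ∈ B}` and `1/5` otherwise.
Coordinates here are 0-indexed and a block element `j : Fin 23` stands for `j+1`. -/
def wittVec (B : Finset (Fin 23)) : EuclideanSpace ℝ (Fin (24+1)) :=
  WithLp.toLp 2 (fun i : Fin (24+1) => if (i : ℕ) = 0 ∨ ∃ j ∈ B, (i : ℕ) = (j : ℕ) + 2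
    then (-3/10 : ℝ) else 1/5)

/-!
For `x ∈ H_24` and a 7-set `B`, `‖x - v_B‖² = ‖x‖² + 1 + ∑_{i ∈ L_B} x_i`, where `L_B` is the set of
the 8 coordinates at which `v_B` equals `-3/10`. Hence `d(e_i, v_B)² ∈ {2, 3}` and
`d(v_B, v_{B'})² = (7 - |B ∩ B'|)/2`, so the distances are `√2, √3` because the Witt design is
quasi-symmetric; this, like everything else about the design used here, follows from the moment
identities `∑_B C(|C ∩ B|, i) = λ_i C(|C|, i)` (`i ≤ 4`, `λ = 253, 77, 21, 5, 1`).

For maximality, a point `z ∈ H_24` at squared distance 2 or 3 from every `e_i` has all coordinates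
in `{c, c + 1/2}` with `c = (‖z‖² - 2)/2`, and the two quadratic constraints force `c = -3/10` or
`c = -1/5`. Its squared distances to the `v_B` are then affine in `|E ∩ B|`, where `E` records the
coordinates `≥ 2` equal to `c + 1/2`; so `|E ∩ B|` takes two values `p, q` on the blocks, and
`∑_B (|E ∩ B| - p)(|E ∩ B| - q) = 0` contradicts the second moment identity in each of the eight
cases.
-/

open Finset

section Design

variable {α : Type*} [DecidableEq α]

structure IsDesign (t k lam : ℕ) (𝔅 : Finset (Finset α)) : Prop where
  card_block : ∀ B ∈ 𝔅, #B = k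
  card_superset : ∀ Q : Finset α, #Q = t → #{B ∈ 𝔅 | Q ⊆ B} = lam

lemma sum_choose_card_inter (𝔅 : Finset (Finset α)) (C : Finset α) (i : ℕ) :
    ∑ B ∈ 𝔅, (#(C ∩ B)).choose i = ∑ T ∈ C.powersetCard i, #{B ∈ 𝔅 | T ⊆ B} := by
  have hsub (B : Finset α) : (C ∩ B).powersetCard i = {T ∈ C.powersetCard i | T ⊆ B} := by
    ext T
    simp only [mem_powersetCard, mem_filter, subset_inter_iff]
    tauto
  simp_rw [← card_powersetCard, hsub, card_filter]
  exact sum_comm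

variable [Fintype α] {t k lam : ℕ} {𝔅 : Finset (Finset α)}

lemma IsDesign.card_superset_mul_choose (h : IsDesign t k lam 𝔅) {T : Finset α} (hT : #T ≤ t) :
    #{B ∈ 𝔅 | T ⊆ B} * (k - #T).choose (t - #T)
      = lam * (Fintype.card α - #T).choose (t - #T) := by
  set Qs := {Q ∈ (univ : Finset α).powersetCard t | T ⊆ Q}
  have hcount := sum_card_bipartiteAbove_eq_sum_card_bipartiteBelow
    (s := {B ∈ 𝔅 | T ⊆ B}) (t := Qs) (r := fun B Q => Q ⊆ B)
  have habove : ∀ B ∈ {B ∈ 𝔅 | T ⊆ B}, #(Qs.bipartiteAbove (fun B Q => Q ⊆ B) B)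
      = (k - #T).choose (t - #T) := by
    intro B hB
    obtain ⟨hB𝔅, hTB⟩ := mem_filter.mp hB
    rw [← h.card_block B hB𝔅, ← card_filter_powersetCard_subset T B t hTB hT]
    congr 1
    ext Q
    simp only [bipartiteAbove, Qs, mem_filter, mem_powersetCard, subset_univ, true_and]
    tauto
  have hbelow : ∀ Q ∈ Qs, #({B ∈ 𝔅 | T ⊆ B}.bipartiteBelow (fun B Q => Q ⊆ B) Q) = lam := by
    intro Q hQ
    obtain ⟨hQt, hTQ⟩ := mem_filter.mp hQ
    rw [← h.card_superset Q (mem_powersetCard.mp hQt).2]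
    congr 1
    ext B
    simp only [bipartiteBelow, mem_filter]
    exact ⟨fun hB => ⟨hB.1.1, hB.2⟩, fun hB => ⟨⟨hB.1, hTQ.trans hB.2⟩, hB.2⟩⟩
  rw [sum_congr rfl habove, sum_congr rfl hbelow, sum_const, sum_const, smul_eq_mul,
    smul_eq_mul, card_filter_powersetCard_subset T univ t (subset_univ T) hT, card_univ] at hcount
  rw [hcount, mul_comm]

lemma IsDesign.sum_choose_card_inter_mul (h : IsDesign t k lam 𝔅) (C : Finset α) {i : ℕ}
    (hi : i ≤ t) :
    (∑ B ∈ 𝔅, (#(C ∩ B)).choose i) * (k - i).choose (t - i)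
      = (#C).choose i * lam * (Fintype.card α - i).choose (t - i) := by
  rw [sum_choose_card_inter, sum_mul, sum_congr rfl fun T hT => ?_, sum_const, card_powersetCard,
    smul_eq_mul, mul_assoc]
  rw [← (mem_powersetCard.mp hT).2]
  exact h.card_superset_mul_choose ((mem_powersetCard.mp hT).2 ▸ hi)

end Design

section WittDesign

variable {𝔅 : Finset (Finset (Fin 23))}

lemma IsDesign.witt_card (h : IsDesign 4 7 1 𝔅) : #𝔅 = 253 := by
  have h0 := h.sum_choose_card_inter_mul ∅ (i := 0) (Nat.zero_le 4)
  norm_num [Nat.choose] at h0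
  omega

lemma IsDesign.witt_sum_choose_card_inter (h : IsDesign 4 7 1 𝔅) (C : Finset (Fin 23)) :
    ∑ B ∈ 𝔅, #(C ∩ B) = 77 * #C ∧
    ∑ B ∈ 𝔅, (#(C ∩ B)).choose 2 = 21 * (#C).choose 2 ∧
    ∑ B ∈ 𝔅, (#(C ∩ B)).choose 3 = 5 * (#C).choose 3 ∧
    ∑ B ∈ 𝔅, (#(C ∩ B)).choose 4 = (#C).choose 4 := by
  have h1 := h.sum_choose_card_inter_mul C (i := 1) (by norm_num)
  have h2 := h.sum_choose_card_inter_mul C (i := 2) (by norm_num)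
  have h3 := h.sum_choose_card_inter_mul C (i := 3) (by norm_num)
  have h4 := h.sum_choose_card_inter_mul C (i := 4) (by norm_num)
  simp only [Nat.choose_one_right, Fintype.card_fin] at h1 h2 h3 h4
  norm_num [Nat.choose] at h1 h2 h3 h4
  omega

lemma IsDesign.witt_sum_sub_mul_sub (h : IsDesign 4 7 1 𝔅) (C : Finset (Fin 23)) (p q : ℝ) :
    ∑ B ∈ 𝔅, ((#(C ∩ B) : ℝ) - p) * (#(C ∩ B) - q)
      = 21 * #C * (#C - 1) + 77 * #C * (1 - p - q) + 253 * p * q := by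
  obtain ⟨h1, h2, -, -⟩ := h.witt_sum_choose_card_inter C
  have hpt (s : ℕ) : ((s : ℝ) - p) * (s - q) = 2 * (s.choose 2 : ℝ) + (1 - p - q) * s + p * q := by
    rw [Nat.cast_choose_two]; ring
  simp only [hpt, sum_add_distrib, ← mul_sum, sum_const, nsmul_eq_mul]
  rw [← Nat.cast_sum, ← Nat.cast_sum, h.witt_card, h1, h2]
  push_cast [Nat.cast_choose_two]
  ring

lemma sq_sub_one_mul_sq_sub_three_eq_sum_choose (s : ℕ) :
    ((s : ℝ) - 1) ^ 2 * ((s : ℝ) - 3) ^ 2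
      = 24 * (s.choose 4 : ℝ) - 12 * (s.choose 3 : ℝ) + 10 * (s.choose 2 : ℝ) - 9 * s + 9 := by
  simp only [Nat.cast_choose_eq_descPochhammer_div, descPochhammer_succ_eval,
    descPochhammer_zero, Polynomial.eval_one, Nat.factorial]
  push_cast
  ring

lemma IsDesign.witt_card_inter_eq_one_or_three (h : IsDesign 4 7 1 𝔅) {B D : Finset (Fin 23)}
    (hB : B ∈ 𝔅) (hD : D ∈ 𝔅) (hBD : B ≠ D) : #(B ∩ D) = 1 ∨ #(B ∩ D) = 3 := by
  -- The nonnegative `f` sums over all blocks to `f 7`, the contribution of `D = B` alone.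
  set f : ℕ → ℝ := fun s => ((s : ℝ) - 1) ^ 2 * ((s : ℝ) - 3) ^ 2 with hf
  obtain ⟨h1, h2, h3, h4⟩ := h.witt_sum_choose_card_inter B
  have hsum : ∑ D ∈ 𝔅, f #(B ∩ D) = 576 := by
    simp only [hf, sq_sub_one_mul_sq_sub_three_eq_sum_choose, sum_add_distrib, sum_sub_distrib,
      ← mul_sum, sum_const, nsmul_eq_mul]
    rw [← Nat.cast_sum, ← Nat.cast_sum, ← Nat.cast_sum, ← Nat.cast_sum, h.witt_card, h1, h2, h3,
      h4, h.card_block B hB]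
    norm_num [Nat.choose]
  have hself : f #(B ∩ B) = 576 := by
    rw [inter_self, h.card_block B hB, hf]; norm_num
  have hrest : ∑ D ∈ 𝔅.erase B, f #(B ∩ D) = 0 := by
    rw [← add_sum_erase 𝔅 _ hB, hself] at hsum; linarith
  have hD0 : f #(B ∩ D) = 0 :=
    (sum_eq_zero_iff_of_nonneg (fun _ _ => by positivity)).mp hrest D
      (mem_erase.mpr ⟨hBD.symm, hD⟩)
  rcases mul_eq_zero.mp hD0 with h | h <;> [left; right] <;>
    exact_mod_cast sub_eq_zero.mp (pow_eq_zero_iff two_ne_zero |>.mp h)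

end WittDesign

section TwoValuedSums

lemma sum_ite_mem_const {ι : Type*} [DecidableEq ι] (s t : Finset ι) (a b : ℝ) :
    ∑ i ∈ s, (if i ∈ t then a else b) = #s * b + #(s ∩ t) * (a - b) := by
  have hpt (i : ι) : (if i ∈ t then a else b) = b + if i ∈ t then a - b else 0 := by
    split_ifs <;> ring
  simp only [hpt, sum_add_distrib, sum_const, nsmul_eq_mul, sum_ite_mem]

lemma sum_comp_eq_of_forall_eq_or_eq {ι : Type*} (s : Finset ι) (f : ι → ℝ) {a b : ℝ}
    (h : ∀ i ∈ s, f i = a ∨ f i = b) (g : ℝ → ℝ) :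
    ∑ i ∈ s, g (f i) = (#s - #{i ∈ s | f i = b}) * g a + #{i ∈ s | f i = b} * g b := by
  have hpt : ∀ i ∈ s, g (f i) = if f i = b then g b else g a := by
    intro i hi
    split_ifs with hb
    · rw [hb]
    · rw [(h i hi).resolve_right hb]
  rw [sum_congr rfl hpt, sum_ite, sum_const, sum_const, nsmul_eq_mul, nsmul_eq_mul,
    ← card_filter_add_card_filter_not (s := s) (fun i => f i = b)]
  push_cast
  ring

end TwoValuedSums

section Geometry

lemma dist_eq_sqrt_iff {E : Type*} [PseudoMetricSpace E] {x y : E} {r : ℝ} (hr : 0 ≤ r) :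
    dist x y = √r ↔ dist x y ^ 2 = r := by
  rw [eq_comm, Real.sqrt_eq_iff_eq_sq hr dist_nonneg, eq_comm]

lemma distSet_mono {m : ℕ} {X Y : Set (EuclideanSpace ℝ (Fin m))} (h : X ⊆ Y) :
    distSet X ⊆ distSet Y := by
  rintro r ⟨x, hx, y, hy, hxy, rfl⟩
  exact ⟨x, h hx, y, h hy, hxy, rfl⟩

lemma IsTwoDistSet.distSet_eq_of_subset {m : ℕ} {X Y : Set (EuclideanSpace ℝ (Fin m))}
    (hY : IsTwoDistSet Y) (hX : IsTwoDistSet X) (h : X ⊆ Y) : distSet Y = distSet X :=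
  (Set.eq_of_subset_of_ncard_le (distSet_mono h) (by rw [hX, hY])
    (Set.finite_of_ncard_ne_zero (by rw [hY]; norm_num))).symm

lemma dist_single_sq {ι : Type*} [Fintype ι] [DecidableEq ι] (x : EuclideanSpace ℝ ι) (i : ι) :
    dist x (EuclideanSpace.single i 1) ^ 2 = ‖x‖ ^ 2 + 1 - 2 * x i := by
  rw [dist_eq_norm, @norm_sub_sq_real, EuclideanSpace.inner_single_right, PiLp.norm_single]
  simp only [one_mul, norm_one, conj_trivial]
  ring

lemma apply_eq_or_eq_of_dist_single_sq {ι : Type*} [Fintype ι] [DecidableEq ι]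
    {x : EuclideanSpace ℝ ι} {i : ι}
    (h : dist x (EuclideanSpace.single i 1) ^ 2 = 2 ∨ dist x (EuclideanSpace.single i 1) ^ 2 = 3) :
    x i = (‖x‖ ^ 2 - 2) / 2 ∨ x i = (‖x‖ ^ 2 - 2) / 2 + 1/2 := by
  rw [dist_single_sq] at h
  rcases h with h | h
  · right; linarith
  · left; linarith

def liftIndex : Fin 23 ↪ Fin (24 + 1) := (Fin.succEmb 23).trans (Fin.succEmb 24)

def liftBlock (B : Finset (Fin 23)) : Finset (Fin (24 + 1)) := insert 0 (B.map liftIndex)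

lemma sum_univ_eq_add_sum_liftIndex (x : Fin (24 + 1) → ℝ) :
    ∑ i, x i = x 0 + x 1 + ∑ j, x (liftIndex j) := by
  rw [Fin.sum_univ_succ, Fin.sum_univ_succ, add_assoc]
  rfl

lemma sum_liftBlock (B : Finset (Fin 23)) (x : Fin (24 + 1) → ℝ) :
    ∑ i ∈ liftBlock B, x i = x 0 + ∑ j ∈ B, x (liftIndex j) := by
  rw [liftBlock, sum_insert, sum_map]
  simp [liftIndex, Fin.succ_ne_zero]

lemma card_liftBlock (B : Finset (Fin 23)) : #(liftBlock B) = #B + 1 := by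
  rw [liftBlock, card_insert_of_notMem, card_map]
  simp [liftIndex, Fin.succ_ne_zero]

lemma liftBlock_inter_liftBlock (B B' : Finset (Fin 23)) :
    liftBlock B ∩ liftBlock B' = liftBlock (B ∩ B') := by
  rw [liftBlock, liftBlock, liftBlock, ← insert_inter_distrib, map_inter]

lemma wittVec_apply (B : Finset (Fin 23)) (i : Fin (24 + 1)) :
    wittVec B i = if i ∈ liftBlock B then -3/10 else 1/5 := by
  have hmem : i ∈ liftBlock B ↔ (i : ℕ) = 0 ∨ ∃ j ∈ B, (i : ℕ) = (j : ℕ) + 2 := by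
    simp only [liftBlock, mem_insert, mem_map, liftIndex, Function.Embedding.trans_apply,
      Fin.coe_succEmb, Fin.ext_iff, Fin.val_succ, Fin.val_zero]
    simp only [eq_comm (a := (i : ℕ))]
  simp only [wittVec, PiLp.toLp_apply, hmem]

end Geometry

section WittVectors

variable {B : Finset (Fin 23)}

lemma wittVec_mem_Hplane (hB : #B = 7) : wittVec B ∈ Hplane 24 := by
  simp only [Hplane, Set.mem_ofPred_eq, wittVec_apply, sum_ite_mem_const, univ_inter, card_univ,
    Fintype.card_fin, card_liftBlock, hB]
  norm_num

lemma sum_liftBlock_wittVec (B' : Finset (Fin 23)) (hB' : #B' = 7) :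
    ∑ i ∈ liftBlock B', wittVec B i = 11/10 - #(B ∩ B') / 2 := by
  simp only [wittVec_apply, sum_ite_mem_const, card_liftBlock, liftBlock_inter_liftBlock, hB',
    inter_comm B']
  push_cast
  ring

lemma norm_wittVec_sq (hB : #B = 7) : ‖wittVec B‖ ^ 2 = 7/5 := by
  simp only [EuclideanSpace.real_norm_sq_eq, wittVec_apply, apply_ite (· ^ 2), sum_ite_mem_const,
    univ_inter, card_univ, Fintype.card_fin, card_liftBlock, hB]
  norm_num

lemma dist_wittVec_sq {x : EuclideanSpace ℝ (Fin (24 + 1))} (hx : ∑ i, x i = 1) (hB : #B = 7) :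
    dist x (wittVec B) ^ 2 = ‖x‖ ^ 2 + 1 + ∑ i ∈ liftBlock B, x i := by
  have hpt (i : Fin (24 + 1)) : dist (x i) (wittVec B i) ^ 2
      = x i ^ 2 - 2/5 * x i + 1/25 + if i ∈ liftBlock B then x i + 1/20 else 0 := by
    rw [Real.dist_eq, sq_abs, wittVec_apply]
    split_ifs <;> ring
  simp only [EuclideanSpace.dist_sq_eq, EuclideanSpace.real_norm_sq_eq, hpt, sum_add_distrib,
    sum_sub_distrib, ← mul_sum, sum_ite_mem, univ_inter, sum_const, card_univ, Fintype.card_fin,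
    card_liftBlock, hB, hx]
  norm_num
  ring

lemma dist_single_single_sq {i j : Fin (24 + 1)} (hij : i ≠ j) :
    dist (EuclideanSpace.single i (1 : ℝ)) (EuclideanSpace.single j 1) ^ 2 = 2 := by
  rw [dist_single_sq, PiLp.norm_single, PiLp.single_apply, if_neg hij.symm]
  norm_num

lemma dist_single_wittVec_sq (i : Fin (24 + 1)) (hB : #B = 7) :
    dist (EuclideanSpace.single i (1 : ℝ)) (wittVec B) ^ 2 = if i ∈ liftBlock B then 3 else 2 := by
  have hsum : ∑ l, EuclideanSpace.single i (1 : ℝ) l = 1 := by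
    simp [PiLp.single_apply]
  rw [dist_wittVec_sq hsum hB, PiLp.norm_single]
  simp only [PiLp.single_apply, sum_ite_eq', norm_one]
  split_ifs <;> norm_num

lemma dist_wittVec_wittVec_sq {B' : Finset (Fin 23)} (hB : #B = 7) (hB' : #B' = 7) :
    dist (wittVec B) (wittVec B') ^ 2 = (7 - #(B ∩ B')) / 2 := by
  rw [dist_wittVec_sq (wittVec_mem_Hplane hB) hB', norm_wittVec_sq hB,
    sum_liftBlock_wittVec B' hB']
  ring

lemma liftIndex_mem_liftBlock {B : Finset (Fin 23)} {j : Fin 23} :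
    liftIndex j ∈ liftBlock B ↔ j ∈ B := by
  simp [liftBlock, liftIndex, Fin.succ_ne_zero]

lemma wittVec_injective : Function.Injective wittVec := by
  intro B B' hBB'
  ext j
  have hj := congrArg (fun x : EuclideanSpace ℝ (Fin (24 + 1)) => x (liftIndex j)) hBB'
  simp only [wittVec_apply, liftIndex_mem_liftBlock] at hj
  split_ifs at hj with hB hB' <;> norm_num at hj <;> tauto

lemma single_injective :
    Function.Injective fun i : Fin (24 + 1) => EuclideanSpace.single i (1 : ℝ) := by
  intro i j hij
  by_contra hne
  have := dist_single_single_sq hne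
  simp only at hij
  rw [hij, dist_self] at this
  norm_num at this

lemma single_ne_wittVec {B : Finset (Fin 23)} (hB : #B = 7) (i : Fin (24 + 1)) :
    EuclideanSpace.single i (1 : ℝ) ≠ wittVec B := by
  intro hi
  have := dist_single_wittVec_sq i hB
  rw [hi, dist_self] at this
  split_ifs at this <;> norm_num at this

end WittVectors

section WittConfiguration

variable {𝔅 : Finset (Finset (Fin 23))}

lemma IsDesign.witt_subset_Hplane (h : IsDesign 4 7 1 𝔅) :
    simplex 24 ∪ wittVec '' ↑𝔅 ⊆ Hplane 24 := by
  rintro x (⟨i, rfl⟩ | ⟨B, hB, rfl⟩)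
  · simp [Hplane, PiLp.single_apply]
  · exact wittVec_mem_Hplane (h.card_block B hB)

lemma IsDesign.witt_dist_sq (h : IsDesign 4 7 1 𝔅) {x y : EuclideanSpace ℝ (Fin (24 + 1))}
    (hx : x ∈ simplex 24 ∪ wittVec '' ↑𝔅) (hy : y ∈ simplex 24 ∪ wittVec '' ↑𝔅) (hxy : x ≠ y) :
    dist x y ^ 2 = 2 ∨ dist x y ^ 2 = 3 := by
  rcases hx with ⟨i, rfl⟩ | ⟨B, hB, rfl⟩ <;> rcases hy with ⟨j, rfl⟩ | ⟨B', hB', rfl⟩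
  · exact Or.inl (dist_single_single_sq fun hij => hxy (hij ▸ rfl))
  · rw [dist_single_wittVec_sq i (h.card_block B' hB')]
    split_ifs <;> simp
  · rw [dist_comm, dist_single_wittVec_sq j (h.card_block B hB)]
    split_ifs <;> simp
  · rw [dist_wittVec_wittVec_sq (h.card_block B hB) (h.card_block B' hB')]
    rcases h.witt_card_inter_eq_one_or_three hB hB' fun hBB' => hxy (hBB' ▸ rfl) with hs | hs <;>
      rw [hs] <;> norm_num

lemma IsDesign.witt_ncard (h : IsDesign 4 7 1 𝔅) :
    (simplex 24 ∪ wittVec '' ↑𝔅).ncard = 278 := by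
  have hdisj : Disjoint (simplex 24) (wittVec '' ↑𝔅) := by
    rw [Set.disjoint_left]
    rintro x ⟨i, rfl⟩ ⟨B, hB, hBi⟩
    exact single_ne_wittVec (h.card_block B hB) i hBi.symm
  rw [Set.ncard_union_eq hdisj (Set.finite_range _) (𝔅.finite_toSet.image _), simplex,
    Set.ncard_range_of_injective single_injective, Set.ncard_image_of_injective _ wittVec_injective,
    Set.ncard_coe_finset, h.witt_card]
  simp

lemma IsDesign.witt_distSet (h : IsDesign 4 7 1 𝔅) :
    distSet (simplex 24 ∪ wittVec '' ↑𝔅) = {√2, √3} := by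
  ext r
  simp only [Set.mem_insert_iff, Set.mem_singleton_iff]
  constructor
  · rintro ⟨x, hx, y, hy, hxy, rfl⟩
    simpa only [dist_eq_sqrt_iff zero_le_two, dist_eq_sqrt_iff zero_le_three] using
      h.witt_dist_sq hx hy hxy
  · obtain ⟨B, hB⟩ : 𝔅.Nonempty := by
      rw [← card_pos, h.witt_card]; norm_num
    have h0B : (0 : Fin (24 + 1)) ∈ liftBlock B := mem_insert_self _ _
    rintro (rfl | rfl)
    · refine ⟨_, Or.inl ⟨0, rfl⟩, _, Or.inl ⟨1, rfl⟩, single_injective.ne (by decide), ?_⟩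
      exact (dist_eq_sqrt_iff zero_le_two).mpr (dist_single_single_sq (by decide))
    · refine ⟨_, Or.inl ⟨0, rfl⟩, _, Or.inr ⟨B, hB, rfl⟩,
        single_ne_wittVec (h.card_block B hB) 0, ?_⟩
      rw [dist_eq_sqrt_iff zero_le_three, dist_single_wittVec_sq 0 (h.card_block B hB),
          if_pos h0B]

lemma level_eq_of_two_valued {z : Fin (24 + 1) → ℝ} {c : ℝ}
    (hlevel : ∀ i, z i = c ∨ z i = c + 1/2) (hsum : ∑ i, z i = 1)
    (hsq : ∑ i, z i ^ 2 = 2 * c + 2) : c = -3/10 ∨ c = -1/5 := by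
  have h1 := sum_comp_eq_of_forall_eq_or_eq univ z (fun i _ => hlevel i) id
  have h2 := sum_comp_eq_of_forall_eq_or_eq univ z (fun i _ => hlevel i) (· ^ 2)
  simp only [id, card_univ, Fintype.card_fin, hsum, hsq] at h1 h2
  push_cast at h1 h2
  have hc : (c + 3/10) * (c + 1/5) = 0 := by
    linear_combination (1/25 : ℝ) * h2 - (2/25 : ℝ) * (c + 1/4) * h1
  rcases mul_eq_zero.mp hc with hc | hc
  · left; linarith
  · right; linarith

lemma IsDesign.exists_witt_dist_sq_ne (h : IsDesign 4 7 1 𝔅) {z : EuclideanSpace ℝ (Fin (24 + 1))}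
    (hz : z ∈ Hplane 24) :
    ∃ x ∈ simplex 24 ∪ wittVec '' ↑𝔅, dist z x ^ 2 ≠ 2 ∧ dist z x ^ 2 ≠ 3 := by
  by_contra! hX
  replace hX : ∀ x ∈ simplex 24 ∪ wittVec '' ↑𝔅, dist z x ^ 2 = 2 ∨ dist z x ^ 2 = 3 :=
    fun x hx => or_iff_not_imp_left.mpr (hX x hx)
  set c := (‖z‖ ^ 2 - 2) / 2 with hc_def
  have hlevel (i : Fin (24 + 1)) : z i = c ∨ z i = c + 1/2 :=
    apply_eq_or_eq_of_dist_single_sq (hX _ (Or.inl ⟨i, rfl⟩))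
  have hc := level_eq_of_two_valued hlevel hz
    (by rw [← EuclideanSpace.real_norm_sq_eq]; ring)
  set E : Finset (Fin 23) := {j | z (liftIndex j) = c + 1/2}
  have hsumE : z 0 + z 1 + 23 * c + #E / 2 = 1 := by
    have hs := sum_comp_eq_of_forall_eq_or_eq univ (z ∘ liftIndex) (fun j _ => hlevel _) id
    simp only [id, Function.comp_apply, card_univ, Fintype.card_fin] at hs
    rw [← hz, sum_univ_eq_add_sum_liftIndex, hs]
    ring
  have hblock : ∀ B ∈ 𝔅,
      ((#(E ∩ B) : ℝ) - (-2 - 18 * c - 2 * z 0)) * (#(E ∩ B) - (-18 * c - 2 * z 0)) = 0 := by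
    intro B hB
    have hd := hX _ (Or.inr ⟨B, hB, rfl⟩)
    rw [dist_wittVec_sq hz (h.card_block B hB), sum_liftBlock] at hd
    have hs := sum_comp_eq_of_forall_eq_or_eq B (z ∘ liftIndex) (fun j _ => hlevel _) id
    have hfilter : {j ∈ B | z (liftIndex j) = c + 1/2} = E ∩ B := by
      ext j; simp only [E, mem_filter, mem_inter, mem_univ, true_and]; tauto
    simp only [id, Function.comp_apply, hfilter, h.card_block B hB] at hs
    -- `hd : d(z, v_B)² = 9c + 3 + z 0 + |E ∩ B|/2 ∈ {2, 3}`
    rw [hs] at hd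
    rcases hd with hd | hd
    · exact mul_eq_zero_of_left (by linarith) _
    · exact mul_eq_zero_of_right _ (by linarith)
  have hQ := h.witt_sum_sub_mul_sub E (-2 - 18 * c - 2 * z 0) (-18 * c - 2 * z 0)
  rw [sum_eq_zero hblock, show (#E : ℝ) = 2 * (1 - z 0 - z 1 - 23 * c) by linarith] at hQ
  rcases hlevel 0 with h0 | h0 <;> rcases hlevel 1 with h1 | h1 <;> rw [h0, h1] at hQ <;>
    rcases hc with hc | hc <;> rw [hc] at hQ <;> norm_num at hQ

end WittConfiguration

theorem stmt19 (𝔅 : Finset (Finset (Fin 23)))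
    (hblock : ∀ B ∈ 𝔅, B.card = 7)
    (hdes : ∀ Q : Finset (Fin 23), Q.card = 4 →
      (𝔅.filter (fun B => Q ⊆ B)).card = 1) :
    (simplex 24 ∪ wittVec '' ↑𝔅) ⊆ Hplane 24 ∧
    (simplex 24 ∪ wittVec '' ↑𝔅).ncard = 278 ∧
    distSet (simplex 24 ∪ wittVec '' ↑𝔅) = {Real.sqrt 2, Real.sqrt 3} ∧
    ∀ z ∈ Hplane 24, z ∉ (simplex 24 ∪ wittVec '' ↑𝔅) →
      ¬ IsTwoDistSet ((simplex 24 ∪ wittVec '' ↑𝔅) ∪ {z}) := by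
  have h : IsDesign 4 7 1 𝔅 := ⟨hblock, hdes⟩
  refine ⟨h.witt_subset_Hplane, h.witt_ncard, h.witt_distSet, fun z hz hzX htwo => ?_⟩
  have hX : IsTwoDistSet (simplex 24 ∪ wittVec '' ↑𝔅) := by
    rw [IsTwoDistSet, h.witt_distSet, Set.ncard_pair]
    rw [Ne, Real.sqrt_inj zero_le_two zero_le_three]
    norm_num
  have hzX' : distSet (simplex 24 ∪ wittVec '' ↑𝔅 ∪ {z}) = {√2, √3} := by
    rw [htwo.distSet_eq_of_subset hX Set.subset_union_left, h.witt_distSet]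
  obtain ⟨x, hx, h2, h3⟩ := h.exists_witt_dist_sq_ne hz
  have hzx : dist z x ∈ distSet (simplex 24 ∪ wittVec '' ↑𝔅 ∪ {z}) :=
    ⟨z, Or.inr rfl, x, Or.inl hx, fun hzx => hzX (hzx ▸ hx), rfl⟩
  rw [hzX'] at hzx
  rcases hzx with hzx | hzx
  · exact h2 ((dist_eq_sqrt_iff zero_le_two).mp hzx)
  · exact h3 ((dist_eq_sqrt_iff zero_le_three).mp hzx)
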